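/- Let n ≥ 1, let R = ℂ[p₁, …, pₙ, q₁, …, qₙ] be the polynomial ring in 2n variables, equipped with the standard Poisson bracket {f, g} := ∑_{i=1}^{n} (∂f/∂p_i · ∂g/∂q_i − ∂f/∂q_i · ∂g/∂p_i), and let 𝔪₀ := (p₁, …, pₙ, q₁, …, qₙ) be the maximal ideal at the origin. Suppose I ⊊ R is a proper ideal which is involutive ({f, g} ∈ I for all f, g ∈ I) and contains 𝔪₀^l for some integer l ≥ 1. Then I ⊆ 𝔪₀². -/

import Mathlib

/-!
If `f ∈ I` had a nonzero linear part, some coordinate `w` would satisfy `{f, w}(0) ≠ 0`.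
The derivation `D = {f, ·}` preserves `I` and lowers the `𝔪`-adic order by at most one, and
`D (w ^ (m + 1)) = (m + 1) w ^ m D w` with `(m + 1) D w` a unit modulo `𝔪`. Descending induction
from `w ^ l ∈ 𝔪 ^ l ⊆ I` gives `w ^ m ∈ I + 𝔪 ^ (m + 1)` for every `m`, and `m = 0` gives
`1 ∈ I + 𝔪 = 𝔪`.
-/

namespace Ideal

variable {R : Type*} [CommRing R]

theorem le_of_pow_le_of_ne_top {I M : Ideal R} (hM : M.IsMaximal) {l : ℕ} (hl : M ^ l ≤ I)
    (hI : I ≠ ⊤) : I ≤ M := by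
  obtain ⟨P, hP, hIP⟩ := I.exists_le_maximal hI
  rwa [hM.eq_of_le hP.ne_top (hP.isPrime.le_of_pow_le (hl.trans hIP))]

theorem mem_sup_pow_succ_of_mul_mem {I M : Ideal R} (hM : M.IsMaximal) {m : ℕ} {x y : R}
    (hx : x ∉ M) (hy : y ∈ M ^ m) (hxy : y * x ∈ I ⊔ M ^ (m + 1)) : y ∈ I ⊔ M ^ (m + 1) := by
  obtain ⟨a, i, hi, hax⟩ := hM.exists_inv hx
  have hyi : y * i ∈ I ⊔ M ^ (m + 1) := mem_sup_right (pow_succ M m ▸ mul_mem_mul hy hi)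
  rw [show y = a * (y * x) + y * i by linear_combination -y * hax]
  exact add_mem (mul_mem_left _ a hxy) hyi

end Ideal

namespace Derivation

variable {S R : Type*} [CommSemiring S] [CommRing R] [Algebra S R] (D : Derivation S R R)

theorem map_mem_pow_of_mem_pow_succ {M : Ideal R} {k : ℕ} {x : R} (hx : x ∈ M ^ (k + 1)) :
    D x ∈ M ^ k := by
  induction k generalizing x with
  | zero => simp
  | succ k ih =>
    rw [pow_succ] at hx
    refine Submodule.mul_induction_on hx (fun a ha b hb => ?_) (fun x y hx hy => ?_)
    · rw [D.leibniz, smul_eq_mul, smul_eq_mul, mul_comm b]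
      exact add_mem (Ideal.mul_mem_right _ _ ha) (Ideal.mul_mem_mul (ih ha) hb)
    · rw [map_add]
      exact add_mem hx hy

theorem map_mem_sup_pow {I M : Ideal R} (hDI : ∀ x ∈ I, D x ∈ I) {k : ℕ} {x : R}
    (hx : x ∈ I ⊔ M ^ (k + 1)) : D x ∈ I ⊔ M ^ k := by
  obtain ⟨a, ha, b, hb, rfl⟩ := Submodule.mem_sup.mp hx
  rw [map_add]
  exact add_mem (Ideal.mem_sup_left (hDI a ha))
    (Ideal.mem_sup_right (D.map_mem_pow_of_mem_pow_succ hb))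

theorem pow_mem_sup_of_pow_succ_mem_sup [Algebra ℚ R] {I M : Ideal R} (hM : M.IsMaximal)
    (hDI : ∀ x ∈ I, D x ∈ I) {w : R} (hw : w ∈ M) (hDw : D w ∉ M) {m : ℕ}
    (hm : w ^ (m + 1) ∈ I ⊔ M ^ (m + 2)) : w ^ m ∈ I ⊔ M ^ (m + 1) := by
  have hunit : IsUnit ((m + 1 : ℕ) : R) := by
    rw [← _root_.map_natCast (algebraMap ℚ R)]
    exact (isUnit_iff_ne_zero.mpr (Nat.cast_ne_zero.mpr m.succ_ne_zero)).map _
  have hx : (m + 1 : ℕ) * D w ∉ M :=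
    hM.isPrime.mul_notMem (fun h => hM.ne_top (M.eq_top_of_isUnit_mem h hunit)) hDw
  refine Ideal.mem_sup_pow_succ_of_mul_mem hM hx (M.pow_mem_pow hw m) ?_
  have := D.map_mem_sup_pow hDI hm
  rwa [D.leibniz_pow, nsmul_eq_mul, smul_eq_mul, Nat.add_sub_cancel, mul_left_comm] at this

theorem not_le_of_pow_le [Algebra ℚ R] {I M : Ideal R} (hM : M.IsMaximal) {l : ℕ}
    (hl : M ^ l ≤ I) (hDI : ∀ x ∈ I, D x ∈ I) {w : R} (hw : w ∈ M) (hDw : D w ∉ M) :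
    ¬ I ≤ M := by
  have hpow : ∀ k m, l ≤ m + k → w ^ m ∈ I ⊔ M ^ (m + 1) := by
    intro k
    induction k with
    | zero => exact fun m hm =>
        Ideal.mem_sup_left (hl (Ideal.pow_le_pow_right hm (M.pow_mem_pow hw m)))
    | succ k ih => exact fun m hm =>
        D.pow_mem_sup_of_pow_succ_mem_sup hM hDI hw hDw (ih (m + 1) (by omega))
  intro hIM
  have hone := hpow l 0 (by omega)
  rw [pow_zero, zero_add, pow_one, sup_eq_right.mpr hIM] at hone
  exact hM.ne_top ((Ideal.eq_top_iff_one M).mpr hone)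

end Derivation

namespace MvPolynomial

variable {σ R K : Type*}

section CommSemiring

variable [CommSemiring R]

theorem mem_idealOfVars_iff {p : MvPolynomial σ R} :
    p ∈ idealOfVars σ R ↔ constantCoeff p = 0 := by
  rw [← pow_one (idealOfVars σ R), mem_pow_idealOfVars_iff']
  simp [Finsupp.degree_eq_zero_iff, constantCoeff_eq]

theorem exists_coeff_single_ne_zero {p : MvPolynomial σ R} (hp : p ∈ idealOfVars σ R)
    (hp2 : p ∉ idealOfVars σ R ^ 2) : ∃ v, coeff (Finsupp.single v 1) p ≠ 0 := by
  contrapose! hp2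
  rw [mem_idealOfVars_iff, constantCoeff_eq] at hp
  rw [mem_pow_idealOfVars_iff']
  intro d hd
  obtain hd0 | hd1 : d.degree = 0 ∨ d.degree = 1 := by omega
  · rwa [(Finsupp.degree_eq_zero_iff d).mp hd0]
  · obtain ⟨v, rfl⟩ : d ∈ Set.range (Finsupp.single · 1) := Finsupp.range_single_one ▸ hd1
    exact hp2 v

theorem constantCoeff_pderiv (i : σ) (p : MvPolynomial σ R) :
    constantCoeff (pderiv i p) = coeff (Finsupp.single i 1) p := by
  simp [constantCoeff_eq, coeff_pderiv]

end CommSemiring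

theorem isMaximal_idealOfVars [Field K] : (idealOfVars σ K).IsMaximal := by
  have : idealOfVars σ K = RingHom.ker constantCoeff := by
    ext p
    rw [mem_idealOfVars_iff, RingHom.mem_ker]
  rw [this]
  exact RingHom.ker_isMaximal_of_surjective _ fun c => ⟨C c, constantCoeff_C σ c⟩

section Hamiltonian

variable [CommRing R] {n : ℕ}

/-- The derivation `{f, ·}` of the standard Poisson bracket, where `pᵢ = X (inl i)` and
`qᵢ = X (inr i)`. -/
noncomputable def hamiltonianDerivation (f : MvPolynomial (Fin n ⊕ Fin n) R) :
    Derivation R (MvPolynomial (Fin n ⊕ Fin n) R) (MvPolynomial (Fin n ⊕ Fin n) R) :=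
  ∑ i, (pderiv (Sum.inl i) f • pderiv (Sum.inr i) - pderiv (Sum.inr i) f • pderiv (Sum.inl i))

theorem hamiltonianDerivation_apply (f g : MvPolynomial (Fin n ⊕ Fin n) R) :
    hamiltonianDerivation f g = ∑ i, (pderiv (Sum.inl i) f * pderiv (Sum.inr i) g
      - pderiv (Sum.inr i) f * pderiv (Sum.inl i) g) := by
  rw [hamiltonianDerivation, ← Derivation.coeFnAddMonoidHom_apply, map_sum, Finset.sum_apply]
  simp

theorem hamiltonianDerivation_X_inl (f : MvPolynomial (Fin n ⊕ Fin n) R) (j : Fin n) :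
    hamiltonianDerivation f (X (Sum.inl j)) = -pderiv (Sum.inr j) f := by
  simp [hamiltonianDerivation_apply, pderiv_X, Pi.single_apply]

theorem hamiltonianDerivation_X_inr (f : MvPolynomial (Fin n ⊕ Fin n) R) (j : Fin n) :
    hamiltonianDerivation f (X (Sum.inr j)) = pderiv (Sum.inl j) f := by
  simp [hamiltonianDerivation_apply, pderiv_X, Pi.single_apply]

theorem exists_hamiltonianDerivation_X_notMem [Field K] {f : MvPolynomial (Fin n ⊕ Fin n) K}
    {v : Fin n ⊕ Fin n} (hv : coeff (Finsupp.single v 1) f ≠ 0) :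
    ∃ w, hamiltonianDerivation f (X w) ∉ idealOfVars (Fin n ⊕ Fin n) K := by
  simp only [mem_idealOfVars_iff]
  rcases v with j | j
  · exact ⟨Sum.inr j, by rwa [hamiltonianDerivation_X_inr, constantCoeff_pderiv]⟩
  · exact ⟨Sum.inl j, by
    rwa [hamiltonianDerivation_X_inl, map_neg, neg_eq_zero, constantCoeff_pderiv]⟩

end Hamiltonian

end MvPolynomial

open MvPolynomial

theorem statement19_general (n : ℕ)
    (I : Ideal (MvPolynomial (Fin n ⊕ Fin n) ℂ)) (hproper : I ≠ ⊤)
    (hinv : ∀ f ∈ I, ∀ g ∈ I,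
      (∑ i : Fin n,
        (pderiv (Sum.inl i) f * pderiv (Sum.inr i) g
          - pderiv (Sum.inr i) f * pderiv (Sum.inl i) g)) ∈ I)
    (l : ℕ)
    (hml : (Ideal.span (Set.range (X : Fin n ⊕ Fin n → MvPolynomial (Fin n ⊕ Fin n) ℂ))) ^ l
            ≤ I) :
    I ≤ (Ideal.span (Set.range (X : Fin n ⊕ Fin n → MvPolynomial (Fin n ⊕ Fin n) ℂ))) ^ 2 := by
  have hM : (idealOfVars (Fin n ⊕ Fin n) ℂ).IsMaximal := isMaximal_idealOfVars
  have hIM : I ≤ idealOfVars (Fin n ⊕ Fin n) ℂ := Ideal.le_of_pow_le_of_ne_top hM hml hproper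
  intro f hf
  by_contra hf2
  obtain ⟨v, hv⟩ := exists_coeff_single_ne_zero (hIM hf) hf2
  obtain ⟨w, hw⟩ := exists_hamiltonianDerivation_X_notMem hv
  have hDI : ∀ g ∈ I, hamiltonianDerivation f g ∈ I := fun g hg => by
    rw [hamiltonianDerivation_apply]
    exact hinv f hf g hg
  exact (hamiltonianDerivation f).not_le_of_pow_le hM hml hDI
    (Ideal.subset_span (Set.mem_range_self w)) hw hIM

/-- Let `R = ℂ[p₁,…,pₙ,q₁,…,qₙ]` with the standard Poisson bracket
`{f,g} = ∑ᵢ (∂f/∂pᵢ·∂g/∂qᵢ − ∂f/∂qᵢ·∂g/∂pᵢ)` (here `pᵢ = X (inl i)`, `qᵢ = X (inr i)`),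
and let `𝔪₀` be the maximal ideal generated by all the variables.  If `I ⊊ R` is a proper
involutive ideal containing `𝔪₀^l` for some `l ≥ 1`, then `I ⊆ 𝔪₀²`. -/
theorem statement19 (n : ℕ) (hn : 1 ≤ n)
    (I : Ideal (MvPolynomial (Fin n ⊕ Fin n) ℂ)) (hproper : I ≠ ⊤)
    (hinv : ∀ f ∈ I, ∀ g ∈ I,
      (∑ i : Fin n,
        (pderiv (Sum.inl i) f * pderiv (Sum.inr i) g
          - pderiv (Sum.inr i) f * pderiv (Sum.inl i) g)) ∈ I)
    (l : ℕ) (hl : 1 ≤ l)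
    (hml : (Ideal.span (Set.range (X : Fin n ⊕ Fin n → MvPolynomial (Fin n ⊕ Fin n) ℂ))) ^ l
            ≤ I) :
    I ≤ (Ideal.span (Set.range (X : Fin n ⊕ Fin n → MvPolynomial (Fin n ⊕ Fin n) ℂ))) ^ 2 :=
  statement19_general n I hproper hinv l hml
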